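/- (Decomposition of the convex estimator of M.) Let n, r be positive integers and λ > 0. Let M*, E, Z ∈ ℝ^{n×n} with Z ∈ {0,1}^{n×n}, τ* ∈ ℝ, and O := M* + τ*Z + E. Suppose M̂ ∈ ℝ^{n×n} has an SVD M̂ = ÛΣ̂V̂ᵀ with Û, V̂ ∈ ℝ^{n×r} having orthonormal columns, let P_{T̂⊥}(A) := (I − ÛÛᵀ)A(I − V̂V̂ᵀ) and P_{T̂}(A) := A − P_{T̂⊥}(A), and suppose ‖P_{T̂⊥}(Z)‖_F > 0. Suppose τ̂ ∈ ℝ and W ∈ ℝ^{n×n} satisfy the first-order optimality conditions: ⟨Z, O − M̂ − τ̂Z⟩ = 0; O − M̂ − τ̂Z = λ(ÛV̂ᵀ + W); and P_{T̂⊥}(W) = W. Then M̂ − M* = −λÛV̂ᵀ − (λ⟨Z, ÛV̂ᵀ⟩/‖P_{T̂⊥}(Z)‖_F²)·P_{T̂}(Z) − (⟨P_{T̂⊥}(Z), E⟩/‖P_{T̂⊥}(Z)‖_F² + ⟨Z, P_{T̂⊥}(M*)⟩/‖P_{T̂⊥}(Z)‖_F²)·P_{T̂}(Z) − P_{T̂⊥}(M*)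 + P_{T̂}(E). -/

import Mathlib

noncomputable section
open Matrix MeasureTheory

namespace Paper

/-- Frobenius (trace) inner product `⟨A,B⟩ = tr(Aᵀ B)`. -/
def finner {m k : Type*} [Fintype m] [Fintype k] (A B : Matrix m k ℝ) : ℝ :=
  Matrix.trace (Aᵀ * B)

/-- Frobenius norm `‖A‖_F`. -/
def fnorm {m k : Type*} [Fintype m] [Fintype k] (A : Matrix m k ℝ) : ℝ :=
  Real.sqrt (finner A A)

/-- Entrywise max norm `‖A‖_∞`. -/
def infNorm {m k : Type*} [Fintype m] [Fintype k] (A : Matrix m k ℝ) : ℝ :=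
  ⨆ i, ⨆ j, |A i j|

/-- Maximum row ℓ₂-norm `‖A‖_{2,∞}`. -/
def rowNorm {m k : Type*} [Fintype m] [Fintype k] (A : Matrix m k ℝ) : ℝ :=
  ⨆ i, Real.sqrt (∑ j, A i j ^ 2)

/-- The (unordered) singular values of a real matrix: the square roots of the
eigenvalues of `Aᴴ * A`. -/
def svals {m k : Type*} [Fintype m] [Fintype k] [DecidableEq k] (A : Matrix m k ℝ) : k → ℝ :=
  fun j => Real.sqrt ((Matrix.isHermitian_conjTranspose_mul_self A).eigenvalues j)

/-- Spectral (ℓ₂ operator) norm: the largest singular value. -/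
def specNorm {m k : Type*} [Fintype m] [Fintype k] [DecidableEq k] (A : Matrix m k ℝ) : ℝ :=
  ⨆ j, svals A j

/-- Nuclear norm `‖A‖_*`: the sum of the singular values. -/
def nucNorm {m k : Type*} [Fintype m] [Fintype k] [DecidableEq k] (A : Matrix m k ℝ) : ℝ :=
  ∑ j, svals A j

/-- The `i`-th largest singular value (singular values in descending order). -/
def svalDesc {m k : ℕ} (A : Matrix (Fin m) (Fin k) ℝ) (i : Fin k) : ℝ :=
  svals A (Tuple.sort (svals A) i.rev)

/-- Projection onto the orthogonal complement of the tangent space determined by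
matrices `U, V` with orthonormal columns: `P_{T⊥}(A) = (I − UUᵀ)A(I − VVᵀ)`. -/
def PTperp {n r : Type*} [Fintype n] [Fintype r] [DecidableEq n]
    (U V : Matrix n r ℝ) (A : Matrix n n ℝ) : Matrix n n ℝ :=
  (1 - U * Uᵀ) * A * (1 - V * Vᵀ)

/-- Projection onto the tangent space: `P_T(A) = A − P_{T⊥}(A)`. -/
def PTang {n r : Type*} [Fintype n] [Fintype r] [DecidableEq n]
    (U V : Matrix n r ℝ) (A : Matrix n n ℝ) : Matrix n n ℝ :=
  A - PTperp U V A

/-- Rank-one versions of the tangent space projections, built from unit vectors. -/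
def PTperpVec {n : Type*} [Fintype n] [DecidableEq n]
    (u v : n → ℝ) (A : Matrix n n ℝ) : Matrix n n ℝ :=
  (1 - Matrix.vecMulVec u u) * A * (1 - Matrix.vecMulVec v v)

def PTangVec {n : Type*} [Fintype n] [DecidableEq n]
    (u v : n → ℝ) (A : Matrix n n ℝ) : Matrix n n ℝ :=
  A - PTperpVec u v A

/-- A `{0,1}`-valued (treatment) matrix. -/
def IsBinary {n : Type*} (Z : Matrix n n ℝ) : Prop := ∀ i j, Z i j = 0 ∨ Z i j = 1

/-- Sub-Gaussian with ψ₂-Orlicz norm at most `σ`: `E exp((X/σ)²) ≤ 2`. -/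
def SubGaussianLe {Ω : Type*} [MeasurableSpace Ω] (μ : Measure Ω) (X : Ω → ℝ) (σ : ℝ) : Prop :=
  ∫ ω, Real.exp ((X ω / σ) ^ 2) ∂μ ≤ 2

/-- A compact singular value decomposition `M = U (diag s) Vᵀ` with orthonormal columns
and strictly positive singular values. -/
def IsCompactSVD {n r : ℕ} (M : Matrix (Fin n) (Fin n) ℝ)
    (U : Matrix (Fin n) (Fin r) ℝ) (s : Fin r → ℝ) (V : Matrix (Fin n) (Fin r) ℝ) : Prop :=
  Uᵀ * U = 1 ∧ Vᵀ * V = 1 ∧ (∀ i, 0 < s i) ∧ M = U * Matrix.diagonal s * Vᵀ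

/-- Objective of the convex program `g(M, τ)`. -/
def gval {n : ℕ} (O Z : Matrix (Fin n) (Fin n) ℝ) (lam : ℝ)
    (M : Matrix (Fin n) (Fin n) ℝ) (τ : ℝ) : ℝ :=
  1 / 2 * fnorm (O - M - τ • Z) ^ 2 + lam * nucNorm M

/-- `τ(X,Y) = ⟨Z, O − XYᵀ⟩ / ‖Z‖_F²`. -/
def tauOf {n r : ℕ} (Z O : Matrix (Fin n) (Fin n) ℝ)
    (X Y : Matrix (Fin n) (Fin r) ℝ) : ℝ :=
  finner Z (O - X * Yᵀ) / fnorm Z ^ 2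

/-- `∇_X f(X,Y;τ)`. -/
def gradX {n r : ℕ} (Z O : Matrix (Fin n) (Fin n) ℝ) (lam : ℝ)
    (X Y : Matrix (Fin n) (Fin r) ℝ) (τ : ℝ) : Matrix (Fin n) (Fin r) ℝ :=
  (X * Yᵀ + τ • Z - O) * Y + lam • X

/-- `∇_Y f(X,Y;τ)`. -/
def gradY {n r : ℕ} (Z O : Matrix (Fin n) (Fin n) ℝ) (lam : ℝ)
    (X Y : Matrix (Fin n) (Fin r) ℝ) (τ : ℝ) : Matrix (Fin n) (Fin r) ℝ :=
  (X * Yᵀ + τ • Z - O)ᵀ * X + lam • Y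

/-- `∇f(X,Y;τ) ∈ ℝ^{2n×r}`: the vertical stacking of `∇_X f` and `∇_Y f`. -/
def gradf {n r : ℕ} (Z O : Matrix (Fin n) (Fin n) ℝ) (lam : ℝ)
    (X Y : Matrix (Fin n) (Fin r) ℝ) (τ : ℝ) : Matrix (Fin n ⊕ Fin n) (Fin r) ℝ :=
  Matrix.fromRows (gradX Z O lam X Y τ) (gradY Z O lam X Y τ)

/-- The non-convex objective `f(X,Y;τ)`. -/
def fval {n r : ℕ} (Z O : Matrix (Fin n) (Fin n) ℝ) (lam : ℝ)
    (X Y : Matrix (Fin n) (Fin r) ℝ) (τ : ℝ) : ℝ :=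
  1 / 2 * fnorm (O - X * Yᵀ - τ • Z) ^ 2 + lam / 2 * fnorm X ^ 2 + lam / 2 * fnorm Y ^ 2

/-- Algorithm 1 (alternating gradient descent); `τᵗ` is always `tauOf Z O Xᵗ Yᵗ`. -/
def gdIter {n r : ℕ} (Z O : Matrix (Fin n) (Fin n) ℝ) (lam η : ℝ)
    (X0 Y0 : Matrix (Fin n) (Fin r) ℝ) :
    ℕ → Matrix (Fin n) (Fin r) ℝ × Matrix (Fin n) (Fin r) ℝ
  | 0 => (X0, Y0)
  | t + 1 =>
      let p := gdIter Z O lam η X0 Y0 t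
      let τ := tauOf Z O p.1 p.2
      (p.1 - η • gradX Z O lam p.1 p.2 τ, p.2 - η • gradY Z O lam p.1 p.2 τ)

/-- Vertical stacking `F = [X; Y] ∈ ℝ^{2n×r}`. -/
def stack {n r : ℕ} (X Y : Matrix (Fin n) (Fin r) ℝ) : Matrix (Fin n ⊕ Fin n) (Fin r) ℝ :=
  Matrix.fromRows X Y

/-- `H` is an optimal rotation aligning `F` with `Fstar`:
it is orthogonal and minimizes `‖F R − Fstar‖_F` over orthogonal `R`. -/
def IsMinRot {n r : ℕ} (F Fstar : Matrix (Fin n ⊕ Fin n) (Fin r) ℝ)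
    (H : Matrix (Fin r) (Fin r) ℝ) : Prop :=
  Hᵀ * H = 1 ∧ ∀ R : Matrix (Fin r) (Fin r) ℝ, Rᵀ * R = 1 →
    fnorm (F * H - Fstar) ≤ fnorm (F * R - Fstar)

/-!
Write `δ = τ* − τ̂` and `P = P_{T̂⊥}`, a self-adjoint idempotent that kills every matrix of the
form `Û B V̂ᵀ`, in particular `M̂` and `ÛV̂ᵀ`. Applying `P` to the stationarity condition
`M* − M̂ + δZ + E = λ(ÛV̂ᵀ + W)` expresses `λW = P M* + δ P Z + P E`; pairing the same
condition with `Z` and using `⟨Z, P Z⟩ = ‖P Z‖_F²` then solves for `δ`. Substituting both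
into `M̂ − M* = δZ + E − λÛV̂ᵀ − λW` gives the decomposition.
-/

section FrobeniusInner

variable {m k : Type*} [Fintype m] [Fintype k]

lemma finner_add_right (A B C : Matrix m k ℝ) : finner A (B + C) = finner A B + finner A C := by
  simp [finner, Matrix.mul_add]

lemma finner_smul_right (x : ℝ) (A B : Matrix m k ℝ) : finner A (x • B) = x * finner A B := by
  simp [finner, Matrix.mul_smul]

lemma finner_self_nonneg (A : Matrix m k ℝ) : 0 ≤ finner A A := by
  unfold finner Matrix.trace
  refine Finset.sum_nonneg fun j _ => Finset.sum_nonneg fun i _ => ?_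
  simpa [Matrix.transpose_apply] using mul_self_nonneg (A i j)

lemma fnorm_sq (A : Matrix m k ℝ) : fnorm A ^ 2 = finner A A :=
  Real.sq_sqrt (finner_self_nonneg A)

end FrobeniusInner

section TangentSpace

variable {n r : Type*} [Fintype n] [Fintype r] [DecidableEq n] (U V : Matrix n r ℝ)

lemma PTperp_add (A B : Matrix n n ℝ) :
    PTperp U V (A + B) = PTperp U V A + PTperp U V B := by
  rw [PTperp, PTperp, PTperp, ← Matrix.add_mul, ← Matrix.mul_add]

lemma PTperp_sub (A B : Matrix n n ℝ) :
    PTperp U V (A - B) = PTperp U V A - PTperp U V B := by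
  rw [PTperp, PTperp, PTperp, ← Matrix.sub_mul, ← Matrix.mul_sub]

lemma PTperp_smul (x : ℝ) (A : Matrix n n ℝ) :
    PTperp U V (x • A) = x • PTperp U V A := by
  simp [PTperp]

lemma finner_PTperp_right (A B : Matrix n n ℝ) :
    finner A (PTperp U V B) = finner (PTperp U V A) B := by
  have hsymm : ∀ X : Matrix n r ℝ, (1 - X * Xᵀ)ᵀ = 1 - X * Xᵀ := fun X => by
    simp [Matrix.transpose_sub, Matrix.transpose_mul]
  unfold finner PTperp
  rw [Matrix.transpose_mul, Matrix.transpose_mul, hsymm, hsymm, ← Matrix.mul_assoc,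
    Matrix.mul_assoc _ _ B, Matrix.trace_mul_comm, ← Matrix.mul_assoc, ← Matrix.mul_assoc,
    ← Matrix.mul_assoc, Matrix.mul_assoc _ Aᵀ]

variable {U V} [DecidableEq r]

lemma one_sub_mul_transpose_mul (hU : Uᵀ * U = 1) : (1 - U * Uᵀ) * U = 0 := by
  rw [Matrix.sub_mul, Matrix.mul_assoc, hU, Matrix.one_mul, Matrix.mul_one, sub_self]

lemma isIdempotentElem_one_sub_mul_transpose (hU : Uᵀ * U = 1) :
    IsIdempotentElem (1 - U * Uᵀ) := by
  refine IsIdempotentElem.one_sub ?_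
  rw [IsIdempotentElem, Matrix.mul_assoc, ← Matrix.mul_assoc Uᵀ, hU, Matrix.one_mul]

lemma PTperp_mul_mul_transpose (hU : Uᵀ * U = 1) (hV : Vᵀ * V = 1) (B : Matrix r r ℝ) :
    PTperp U V (U * B * Vᵀ) = 0 := by
  have hVQ : Vᵀ * (1 - V * Vᵀ) = 0 := by
    simpa [Matrix.transpose_sub, Matrix.transpose_mul] using
      congrArg Matrix.transpose (one_sub_mul_transpose_mul hV)
  rw [PTperp, ← Matrix.mul_assoc, ← Matrix.mul_assoc, one_sub_mul_transpose_mul hU,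
    Matrix.mul_assoc, Matrix.mul_assoc, hVQ]
  simp

lemma PTperp_PTperp (hU : Uᵀ * U = 1) (hV : Vᵀ * V = 1) (A : Matrix n n ℝ) :
    PTperp U V (PTperp U V A) = PTperp U V A := by
  simp only [PTperp, Matrix.mul_assoc]
  rw [(isIdempotentElem_one_sub_mul_transpose hV).eq, ← Matrix.mul_assoc,
    (isIdempotentElem_one_sub_mul_transpose hU).eq]

lemma fnorm_PTperp_sq (hU : Uᵀ * U = 1) (hV : Vᵀ * V = 1) (A : Matrix n n ℝ) :
    fnorm (PTperp U V A) ^ 2 = finner A (PTperp U V A) := by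
  rw [fnorm_sq, ← finner_PTperp_right, PTperp_PTperp hU hV]

end TangentSpace

theorem stmt10_general
    (n r : ℕ)
    (lam : ℝ)
    (Mstar E Z : Matrix (Fin n) (Fin n) ℝ)
    (τstar : ℝ)
    (O : Matrix (Fin n) (Fin n) ℝ) (hO : O = Mstar + τstar • Z + E)
    (Mhat : Matrix (Fin n) (Fin n) ℝ)
    (Uhat Vhat : Matrix (Fin n) (Fin r) ℝ) (shat : Fin r → ℝ)
    (hUhat : Uhatᵀ * Uhat = 1) (hVhat : Vhatᵀ * Vhat = 1)
    (hSVD : Mhat = Uhat * Matrix.diagonal shat * Vhatᵀ)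
    (hZpos : 0 < fnorm (PTperp Uhat Vhat Z))
    (τhat : ℝ) (W : Matrix (Fin n) (Fin n) ℝ)
    (hfoc1 : finner Z (O - Mhat - τhat • Z) = 0)
    (hfoc2 : O - Mhat - τhat • Z = lam • (Uhat * Vhatᵀ + W))
    (hfoc3 : PTperp Uhat Vhat W = W) :
    Mhat - Mstar
      = -(lam • (Uhat * Vhatᵀ))
        - (lam * finner Z (Uhat * Vhatᵀ) / fnorm (PTperp Uhat Vhat Z) ^ 2)
            • PTang Uhat Vhat Z
        - (finner (PTperp Uhat Vhat Z) E / fnorm (PTperp Uhat Vhat Z) ^ 2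
            + finner Z (PTperp Uhat Vhat Mstar) / fnorm (PTperp Uhat Vhat Z) ^ 2)
            • PTang Uhat Vhat Z
        - PTperp Uhat Vhat Mstar + PTang Uhat Vhat E := by
  set δ := τstar - τhat
  have hstat : Mstar - Mhat + δ • Z + E = lam • (Uhat * Vhatᵀ + W) := by
    rw [← hfoc2, hO]; module
  have hPMhat : PTperp Uhat Vhat Mhat = 0 := hSVD ▸ PTperp_mul_mul_transpose hUhat hVhat _
  have hPUV : PTperp Uhat Vhat (Uhat * Vhatᵀ) = 0 := by
    simpa using PTperp_mul_mul_transpose hUhat hVhat (1 : Matrix (Fin r) (Fin r) ℝ)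
  have hW : lam • W = PTperp Uhat Vhat Mstar + δ • PTperp Uhat Vhat Z + PTperp Uhat Vhat E := by
    have h := congrArg (PTperp Uhat Vhat) hstat
    simp only [PTperp_add, PTperp_sub, PTperp_smul, hPUV, hPMhat, hfoc3, sub_zero,
      zero_add] at h
    exact h.symm
  have hδ : δ * fnorm (PTperp Uhat Vhat Z) ^ 2 = -(lam * finner Z (Uhat * Vhatᵀ)
      + finner (PTperp Uhat Vhat Z) E + finner Z (PTperp Uhat Vhat Mstar)) := by
    rw [hfoc2, smul_add, finner_add_right, hW, finner_add_right, finner_add_right,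
      finner_smul_right, finner_smul_right, finner_PTperp_right Uhat Vhat Z E] at hfoc1
    rw [fnorm_PTperp_sq hUhat hVhat]
    linarith
  calc Mhat - Mstar = δ • Z + E - lam • (Uhat * Vhatᵀ) - lam • W := by
        linear_combination (norm := module) -hstat
    _ = δ • PTang Uhat Vhat Z - lam • (Uhat * Vhatᵀ) - PTperp Uhat Vhat Mstar
          + PTang Uhat Vhat E := by
        rw [hW]; simp only [PTang]; module
    _ = _ := by
        rw [show δ = _ from eq_div_of_mul_eq (pow_pos hZpos 2).ne' hδ]; module

/-- decomposition of the convex estimator of `M`. -/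
theorem stmt10
    (n r : ℕ) (hn : 0 < n) (hr : 0 < r)
    (lam : ℝ) (hlam : 0 < lam)
    (Mstar E Z : Matrix (Fin n) (Fin n) ℝ) (hZ : IsBinary Z)
    (τstar : ℝ)
    (O : Matrix (Fin n) (Fin n) ℝ) (hO : O = Mstar + τstar • Z + E)
    (Mhat : Matrix (Fin n) (Fin n) ℝ)
    (Uhat Vhat : Matrix (Fin n) (Fin r) ℝ) (shat : Fin r → ℝ)
    (hUhat : Uhatᵀ * Uhat = 1) (hVhat : Vhatᵀ * Vhat = 1)
    (hshat : ∀ i, 0 ≤ shat i)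
    (hSVD : Mhat = Uhat * Matrix.diagonal shat * Vhatᵀ)
    (hZpos : 0 < fnorm (PTperp Uhat Vhat Z))
    (τhat : ℝ) (W : Matrix (Fin n) (Fin n) ℝ)
    (hfoc1 : finner Z (O - Mhat - τhat • Z) = 0)
    (hfoc2 : O - Mhat - τhat • Z = lam • (Uhat * Vhatᵀ + W))
    (hfoc3 : PTperp Uhat Vhat W = W) :
    Mhat - Mstar
      = -(lam • (Uhat * Vhatᵀ))
        - (lam * finner Z (Uhat * Vhatᵀ) / fnorm (PTperp Uhat Vhat Z) ^ 2)
            • PTang Uhat Vhat Z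
        - (finner (PTperp Uhat Vhat Z) E / fnorm (PTperp Uhat Vhat Z) ^ 2
            + finner Z (PTperp Uhat Vhat Mstar) / fnorm (PTperp Uhat Vhat Z) ^ 2)
            • PTang Uhat Vhat Z
        - PTperp Uhat Vhat Mstar + PTang Uhat Vhat E :=
  stmt10_general n r lam Mstar E Z τstar O hO Mhat Uhat Vhat shat hUhat hVhat hSVD hZpos τhat W
    hfoc1 hfoc2 hfoc3

end Paper
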